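/- arXiv:2101.04555 — 2 statements merged into one kernel-verified Lean document; each statement's English description precedes it below -/
import Mathlib

section
/- Let X be a real linear n-normed space and x ∈ X with ‖x, b₂,…,bₙ‖ ≠ 0. Then ‖x, b₂,…,bₙ‖ = sup{ |T(x, b₂,…,bₙ)| / ‖T‖ : T a nonzero bounded b-linear functional on X × ⟨b₂⟩ × ⋯ × ⟨bₙ⟩ }. -/
noncomputable section
open Filter Topology

/-- A linear `n+1`-normed space over `𝕜` (real or complex): an `(n+1)`-norm on `X`. -/
structure NNormSp (n : ℕ) (𝕜 : Type*) (X : Type*) [RCLike 𝕜] [AddCommGroup X] [Module 𝕜 X] where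
  N : (Fin (n + 1) → X) → ℝ
  eq_zero_iff : ∀ v : Fin (n + 1) → X, N v = 0 ↔ ¬ LinearIndependent 𝕜 v
  perm_invariant : ∀ (v : Fin (n + 1) → X) (σ : Equiv.Perm (Fin (n + 1))), N (v ∘ σ) = N v
  smul_first : ∀ (α : 𝕜) (x : X) (a : Fin n → X), N (Fin.cons (α • x) a) = ‖α‖ * N (Fin.cons x a)
  add_first : ∀ (x y : X) (a : Fin n → X),
    N (Fin.cons (x + y) a) ≤ N (Fin.cons x a) + N (Fin.cons y a)

namespace NNormSp

variable {n : ℕ} {𝕜 X : Type*} [RCLike 𝕜] [AddCommGroup X] [Module 𝕜 X]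

/-- Convergence of a sequence in a linear n-normed space. -/
def TendstoSeq (S : NNormSp n 𝕜 X) (x : ℕ → X) (l : X) : Prop :=
  ∀ a : Fin n → X, Tendsto (fun k => S.N (Fin.cons (x k - l) a)) atTop (𝓝 0)

/-- Cauchy sequence in a linear n-normed space. -/
def CauchySeqN (S : NNormSp n 𝕜 X) (x : ℕ → X) : Prop :=
  ∀ a : Fin n → X, Tendsto (fun p : ℕ × ℕ => S.N (Fin.cons (x p.1 - x p.2) a)) atTop (𝓝 0)

/-- An n-Banach space: every Cauchy sequence converges. -/
def Complete (S : NNormSp n 𝕜 X) : Prop :=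
  ∀ x : ℕ → X, S.CauchySeqN x → ∃ l, S.TendstoSeq x l

/-- Boundedness of a b-linear functional with respect to the fixed tuple `b`. -/
def IsBounded (S : NNormSp n 𝕜 X) (b : Fin n → X) (T : X → 𝕜) : Prop :=
  ∃ M > (0 : ℝ), ∀ x : X, ‖T x‖ ≤ M * S.N (Fin.cons x b)

/-- The norm of a bounded b-linear functional. -/
def opNorm (S : NNormSp n 𝕜 X) (b : Fin n → X) (T : X → 𝕜) : ℝ :=
  sInf {M : ℝ | 0 < M ∧ ∀ x : X, ‖T x‖ ≤ M * S.N (Fin.cons x b)}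

/-- Continuity of a functional at a point, in the open-ball sense. -/
def ContAt (S : NNormSp n 𝕜 X) (T : X → 𝕜) (x₀ : X) : Prop :=
  ∀ ε > (0 : ℝ), ∃ (e : Fin n → X) (δ : ℝ), 0 < δ ∧
    ∀ x : X, S.N (Fin.cons (x - x₀) e) < δ → ‖T x - T x₀‖ < ε

end NNormSp

/-- A b-linear functional: additive and homogeneous in its first argument. -/
def IsBLinear {𝕜 X : Type*} [RCLike 𝕜] [AddCommGroup X] [Module 𝕜 X] (T : X → 𝕜) : Prop :=
  (∀ x y : X, T (x + y) = T x + T y) ∧ ∀ (c : 𝕜) (x : X), T (c • x) = c * T x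

/-!
Hahn–Banach applied to the seminorm `y ↦ ‖y, b₂, …, bₙ‖` gives a linear functional `g` with
`g x = ‖x, b₂, …, bₙ‖` and `|g y| ≤ ‖y, b₂, …, bₙ‖`, so `‖g‖ = 1` and the value `‖x, b₂, …, bₙ‖`
is attained. Conversely `|T x| ≤ ‖T‖ ‖x, b₂, …, bₙ‖` bounds every element of the set.
-/

theorem Seminorm.exists_dual_vector {𝕜 E : Type*} [RCLike 𝕜] [AddCommGroup E] [Module 𝕜 E]
    (p : Seminorm 𝕜 E) (x : E) :
    ∃ g : Module.Dual 𝕜 E, g x = p x ∧ ∀ y, ‖g y‖ ≤ p y := by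
  have hwd : ∀ c : 𝕜, c • x = 0 → c • (p x : 𝕜) = 0 := by
    intro c hc
    have : ‖c‖ * p x = 0 := by rw [← map_smul_eq_mul, hc, map_zero]
    rw [← norm_eq_zero, norm_smul, RCLike.norm_ofReal, abs_of_nonneg (apply_nonneg p x), this]
  set f := LinearPMap.mkSpanSingleton' (σ := RingHom.id 𝕜) x (p x : 𝕜) hwd
  have hdom : f.domain = 𝕜 ∙ x := LinearPMap.domain_mkSpanSingleton x _ hwd
  obtain ⟨g, hgf, hgp⟩ := Module.Dual.exists_extension_of_le_seminorm f.domain f.toFun (p := p) <| by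
    rintro ⟨_, hz⟩
    obtain ⟨c, rfl⟩ := Submodule.mem_span_singleton.1 (hdom ▸ hz)
    rw [LinearPMap.toFun_eq_coe, LinearPMap.mkSpanSingleton'_apply, map_smul_eq_mul, norm_smul,
      RCLike.norm_ofReal, abs_of_nonneg (apply_nonneg p x), RingHom.id_apply]
  refine ⟨g, ?_, hgp⟩
  have hx : x ∈ f.domain := hdom ▸ Submodule.mem_span_singleton_self x
  exact (hgf ⟨x, hx⟩).trans (LinearPMap.mkSpanSingleton'_apply_self x _ hwd hx)

theorem LinearMap.isBLinear {𝕜 X : Type*} [RCLike 𝕜] [AddCommGroup X] [Module 𝕜 X]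
    (f : X →ₗ[𝕜] 𝕜) : IsBLinear f :=
  ⟨map_add f, map_smul f⟩

namespace NNormSp

variable {n : ℕ} {𝕜 X : Type*} [RCLike 𝕜] [AddCommGroup X] [Module 𝕜 X]
  (S : NNormSp n 𝕜 X) (b : Fin n → X)

def seminorm : Seminorm 𝕜 X :=
  Seminorm.of (fun y => S.N (Fin.cons y b)) (S.add_first · · b) (S.smul_first · · b)

@[simp]
theorem seminorm_apply (y : X) : S.seminorm b y = S.N (Fin.cons y b) := rfl

theorem N_cons_nonneg (y : X) : 0 ≤ S.N (Fin.cons y b) :=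
  apply_nonneg (S.seminorm b) y

variable {S b} {T : X → 𝕜}

theorem le_opNorm_mul (hT : S.IsBounded b T) (y : X) :
    ‖T y‖ ≤ S.opNorm b T * S.N (Fin.cons y b) := by
  obtain ⟨M, hM, hMT⟩ := hT
  rcases (S.N_cons_nonneg b y).eq_or_lt with hy | hy
  · simpa [← hy] using hMT y
  · have : ‖T y‖ / S.N (Fin.cons y b) ≤ S.opNorm b T :=
      le_csInf ⟨M, hM, hMT⟩ fun M' hM' => (div_le_iff₀ hy).2 (hM'.2 y)
    exact (div_le_iff₀ hy).1 this

theorem opNorm_pos (hT : S.IsBounded b T) (hT0 : T ≠ 0) : 0 < S.opNorm b T := by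
  obtain ⟨y, hy⟩ := Function.ne_iff.1 hT0
  have := (norm_pos_iff.2 hy).trans_le (le_opNorm_mul hT y)
  exact pos_of_mul_pos_left this (S.N_cons_nonneg b y)

theorem div_opNorm_le (hT : S.IsBounded b T) (hT0 : T ≠ 0) (y : X) :
    ‖T y‖ / S.opNorm b T ≤ S.N (Fin.cons y b) :=
  (div_le_iff₀' (opNorm_pos hT hT0)).2 (le_opNorm_mul hT y)

theorem opNorm_eq_one {x : X} (hle : ∀ y, ‖T y‖ ≤ S.N (Fin.cons y b))
    (hx : ‖T x‖ = S.N (Fin.cons x b)) (hN : S.N (Fin.cons x b) ≠ 0) : S.opNorm b T = 1 := by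
  have h1 : (1 : ℝ) ∈ {M : ℝ | 0 < M ∧ ∀ y, ‖T y‖ ≤ M * S.N (Fin.cons y b)} :=
    ⟨one_pos, by simpa using hle⟩
  refine le_antisymm (csInf_le ⟨0, fun _ hM => hM.1.le⟩ h1) (le_csInf ⟨1, h1⟩ ?_)
  rintro M ⟨-, hM⟩
  have hpos := (S.N_cons_nonneg b x).lt_of_ne' hN
  exact le_of_mul_le_mul_right (by simpa [hx] using hM x) hpos

end NNormSp

theorem nnorm_eq_sup_over_functionals
    {n : ℕ} {X : Type*} [AddCommGroup X] [Module ℝ X]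
    (S : NNormSp n ℝ X) (b : Fin n → X) (x : X)
    (hN : S.N (Fin.cons x b) ≠ 0) :
    S.N (Fin.cons x b) =
      sSup {r : ℝ | ∃ T : X → ℝ, IsBLinear T ∧ S.IsBounded b T ∧ T ≠ 0 ∧
        r = ‖T x‖ / S.opNorm b T} := by
  obtain ⟨g, hgx, hg⟩ := (S.seminorm b).exists_dual_vector x
  simp only [NNormSp.seminorm_apply, RCLike.ofReal_real_eq_id, id_eq] at hgx hg
  have hgx' : ‖g x‖ = S.N (Fin.cons x b) := by
    rw [hgx, Real.norm_of_nonneg (S.N_cons_nonneg b x)]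
  have hbdd : S.IsBounded b g := ⟨1, one_pos, by simpa using hg⟩
  have hg0 : (g : X → ℝ) ≠ 0 := fun h => hN (by simpa [h] using hgx.symm)
  have hop : S.opNorm b g = 1 := NNormSp.opNorm_eq_one hg hgx' hN
  refine (IsGreatest.csSup_eq ⟨?_, ?_⟩).symm
  · exact ⟨g, g.isBLinear, hbdd, hg0, by rw [hop, div_one, hgx']⟩
  · rintro r ⟨T, -, hT, hT0, rfl⟩
    exact NNormSp.div_opNorm_le hT hT0 x
end
end

section
/- Let W be a subspace of a real linear n-normed space X and x₁ ∈ X \ W such that x₁, b₂,…,bₙ are linearly independent, and suppose h = inf{‖x₁ − x, b₂,…,bₙ‖ : x ∈ W} > 0. Then there exists a bounded b-linear functional T on X × ⟨b₂⟩ × ⋯ × ⟨bₙ⟩ with T(x₁, b₂,…,bₙ) = h, T(x, b₂,…,bₙ) = 0 for all x ∈ W, and ‖T‖ = 1. -/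
noncomputable section
open Filter Topology

/-! With `b₂, …, bₙ` fixed, `x ↦ ‖x, b₂, …, bₙ‖` is a seminorm on `X`, so the statement is the
classical distance-to-a-subspace corollary of Hahn–Banach for that seminorm: define the functional
`w + c x₁ ↦ c h` on `W ⊕ ℝ x₁`, which is dominated by the seminorm because `h` is the distance
from `x₁` to `W`, and extend it. Its norm is at least `1` because
`h = T (x₁ - w) ≤ ‖T‖ ‖x₁ - w, b₂, …, bₙ‖` for every `w ∈ W`. -/

namespace NNormSp

variable {n : ℕ} {𝕜 X : Type*} [RCLike 𝕜] [AddCommGroup X] [Module 𝕜 X]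

def toSeminorm (S : NNormSp n 𝕜 X) (b : Fin n → X) : Seminorm 𝕜 X where
  toFun x := S.N (Fin.cons x b)
  map_zero' := by simpa using S.smul_first 0 0 b
  add_le' x y := S.add_first x y b
  neg' x := by simpa using S.smul_first (-1) x b
  smul' a x := S.smul_first a x b

@[simp]
theorem toSeminorm_apply (S : NNormSp n 𝕜 X) (b : Fin n → X) (x : X) :
    S.toSeminorm b x = S.N (Fin.cons x b) :=
  rfl

end NNormSp

namespace Seminorm

variable {X : Type*} [AddCommGroup X] [Module ℝ X]

theorem mul_le_apply_add_smul (p : Seminorm ℝ X) {W : Submodule ℝ X} {x₁ : X} {h : ℝ}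
    (h0 : 0 ≤ h) (hdist : ∀ w ∈ W, h ≤ p (x₁ - w)) {w : X} (hw : w ∈ W) (c : ℝ) :
    c * h ≤ p (w + c • x₁) := by
  rcases eq_or_ne c 0 with rfl | hc
  · simp
  have hw' : -(c⁻¹ • w) ∈ W := W.neg_mem (W.smul_mem _ hw)
  calc c * h ≤ |c| * h := mul_le_mul_of_nonneg_right (le_abs_self c) h0
    _ ≤ |c| * p (x₁ - -(c⁻¹ • w)) := mul_le_mul_of_nonneg_left (hdist _ hw') (abs_nonneg c)
    _ = p (c • (x₁ - -(c⁻¹ • w))) := by rw [map_smul_eq_mul, Real.norm_eq_abs]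
    _ = p (w + c • x₁) := by
      rw [smul_sub, smul_neg, smul_smul, mul_inv_cancel₀ hc, one_smul, sub_neg_eq_add, add_comm]

theorem exists_linearMap_eq_zero_on_of_le (p : Seminorm ℝ X) {W : Submodule ℝ X} {x₁ : X}
    (hx₁ : x₁ ∉ W) {h : ℝ} (h0 : 0 ≤ h) (hdist : ∀ w ∈ W, h ≤ p (x₁ - w)) :
    ∃ g : X →ₗ[ℝ] ℝ, g x₁ = h ∧ (∀ w ∈ W, g w = 0) ∧ ∀ x, |g x| ≤ p x := by
  let f₀ : X →ₗ.[ℝ] ℝ := ⟨W, 0⟩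
  let f := f₀.supSpanSingleton x₁ h hx₁
  have hfp : ∀ x : f.domain, f x ≤ p x := by
    rintro ⟨x, hx⟩
    obtain ⟨w, hw, _, hc, rfl⟩ := Submodule.mem_sup.1 hx
    obtain ⟨c, rfl⟩ := Submodule.mem_span_singleton.1 hc
    have hf : f ⟨w + c • x₁, hx⟩ = c * h :=
      (LinearPMap.supSpanSingleton_apply_mk f₀ x₁ h hx₁ w hw c).trans (by simp [f₀])
    simpa [hf] using p.mul_le_apply_add_smul h0 hdist hw c
  obtain ⟨g, hgf, hgp⟩ := Module.Dual.exists_extension_of_le_seminorm_real f.domain f.toFun hfp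
  refine ⟨g, ?_, fun w hw => ?_, hgp⟩
  · exact (hgf ⟨x₁, _⟩).trans (LinearPMap.supSpanSingleton_apply_self f₀ h hx₁)
  · exact (hgf ⟨w, _⟩).trans (LinearPMap.supSpanSingleton_apply_mk_of_mem f₀ h hx₁ hw)

end Seminorm

theorem separating_functional_for_subspace_general
    {n : ℕ} {X : Type*} [AddCommGroup X] [Module ℝ X]
    (S : NNormSp n ℝ X) (b : Fin n → X) (W : Submodule ℝ X)
    (x₁ : X) (hx₁ : x₁ ∉ W)
    (h : ℝ)
    (hdef : h = sInf {r : ℝ | ∃ x ∈ W, r = S.N (Fin.cons (x₁ - x) b)})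
    (hpos : 0 < h) :
    ∃ T : X → ℝ, IsBLinear T ∧ S.IsBounded b T ∧
      T x₁ = h ∧ (∀ x ∈ W, T x = 0) ∧ S.opNorm b T = 1 := by
  have hdist : ∀ w ∈ W, h ≤ S.toSeminorm b (x₁ - w) := fun w hw =>
    hdef ▸ csInf_le ⟨0, by rintro _ ⟨x, -, rfl⟩; exact apply_nonneg (S.toSeminorm b) _⟩ ⟨w, hw, rfl⟩
  obtain ⟨g, hgx₁, hgW, hgp⟩ := (S.toSeminorm b).exists_linearMap_eq_zero_on_of_le hx₁ hpos.le hdist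
  have hg_one : ∀ x, ‖g x‖ ≤ 1 * S.N (Fin.cons x b) := by simpa using hgp
  refine ⟨g, ⟨map_add g, map_smul g⟩, ⟨1, one_pos, hg_one⟩, hgx₁, hgW,
    IsLeast.csInf_eq ⟨⟨one_pos, hg_one⟩, fun M ⟨hM, hgM⟩ => ?_⟩⟩
  have hhM : h / M ≤ sInf {r : ℝ | ∃ x ∈ W, r = S.N (Fin.cons (x₁ - x) b)} := by
    refine le_csInf ⟨_, 0, W.zero_mem, rfl⟩ ?_
    rintro _ ⟨w, hw, rfl⟩
    rw [div_le_iff₀' hM]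
    simpa [hgx₁, hgW w hw, abs_of_pos hpos] using hgM (x₁ - w)
  rwa [← hdef, div_le_iff₀ hM, le_mul_iff_one_le_right hpos] at hhM

theorem separating_functional_for_subspace
    {n : ℕ} {X : Type*} [AddCommGroup X] [Module ℝ X]
    (S : NNormSp n ℝ X) (b : Fin n → X) (W : Submodule ℝ X)
    (x₁ : X) (hx₁ : x₁ ∉ W) (hind : LinearIndependent ℝ (Fin.cons x₁ b))
    (h : ℝ)
    (hdef : h = sInf {r : ℝ | ∃ x ∈ W, r = S.N (Fin.cons (x₁ - x) b)})
    (hpos : 0 < h) :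
    ∃ T : X → ℝ, IsBLinear T ∧ S.IsBounded b T ∧
      T x₁ = h ∧ (∀ x ∈ W, T x = 0) ∧ S.opNorm b T = 1 :=
  separating_functional_for_subspace_general S b W x₁ hx₁ h hdef hpos
end
end
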